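/- Let q be an odd prime power with q ≡ 3 (mod 4), let m be a positive integer coprime to q, and let R = F_q[Y]/(Y^m − 1). Then there exists a Hermitian self-dual linear code over R of length ℓ if and only if 4 divides ℓ. -/

import Mathlib

/-!
The augmentation `R → F_q`, `Y ↦ 1`, commutes with conjugation, so it maps a Hermitian self-dual
code `C ⊆ R^ℓ` onto a Euclidean self-orthogonal code `D ⊆ F_q^ℓ`. Since `m` is invertible in
`F_q`, the idempotent `e = (1/m) ∑ Y^j`, which satisfies `e r = aug(r) e`, lifts every vector
orthogonal to `D` back into `C`, so `D` is self-dual and `ℓ = 2k` with `k = dim D`. In a basis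
of `F_q^ℓ` extending one of `D` the Gram matrix has a zero `k × k` block, so its determinant is
`(-1)^k` times a square; it is also the square of a change-of-basis determinant. Hence `(-1)^k` is
a square, and as `-1` is not a square for `q ≡ 3 (mod 4)`, `k` is even.

Conversely, writing `-1 = a² + b²` in `F_q`, the code `y₀ = -a y₂ - b y₃, y₁ = b y₂ - a y₃`
is Hermitian self-dual of length 4, and direct sums of copies of it give every length `4t`.
-/

open Polynomial

noncomputable section

/-- The ring `R = F_q[Y]/(Y^m − 1)`. -/
abbrev Rq (F : Type) [Field F] (m : ℕ) := AdjoinRoot ((X : F[X]) ^ m - 1)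

lemma root_pow_eq_one (F : Type) [Field F] (m : ℕ) :
    (AdjoinRoot.root ((X : F[X]) ^ m - 1)) ^ m = 1 := by
  have h : (aeval (AdjoinRoot.root ((X : F[X]) ^ m - 1)) ((X : F[X]) ^ m - 1)) = 0 := by
    rw [AdjoinRoot.aeval_eq, AdjoinRoot.mk_self]
  simp only [map_sub, map_pow, aeval_X, map_one, sub_eq_zero] at h
  exact h

/-- Conjugation on `R`: the `F`-algebra map determined by `Y ↦ Y^{m−1} (= Y⁻¹)`. -/
noncomputable def conjR (F : Type) [Field F] (m : ℕ) : Rq F m →ₐ[F] Rq F m :=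
  AdjoinRoot.liftAlgHom _ (Algebra.ofId F _) ((AdjoinRoot.root ((X : F[X]) ^ m - 1)) ^ (m - 1)) (by
    show aeval _ _ = 0
    simp only [map_sub, map_pow, aeval_X, map_one, sub_eq_zero, ← pow_mul]
    rw [mul_comm, pow_mul, root_pow_eq_one, one_pow])

/-- The Hermitian inner product `⟨x,y⟩ = Σ_j x_j ⬝ conj(y_j)` on `R^n`. -/
def herm (F : Type) [Field F] (m : ℕ) {n : ℕ} (x y : Fin n → Rq F m) : Rq F m :=
  ∑ j, x j * conjR F m (y j)

/-- A linear code `C ⊆ R^n` is Hermitian self-dual if `C = C^⊥`, i.e. membership in `C`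
coincides with orthogonality to all of `C`. -/
def IsHermSelfDual (F : Type) [Field F] (m : ℕ) {n : ℕ}
    (C : Submodule (Rq F m) (Fin n → Rq F m)) : Prop :=
  ∀ y, y ∈ C ↔ ∀ x ∈ C, herm F m x y = 0

theorem pow_pred_pow_pred {M : Type*} [Monoid M] {x : M} {m : ℕ} (hm : 0 < m) (h : x ^ m = 1) :
    (x ^ (m - 1)) ^ (m - 1) = x := by
  have hinv : x ^ (m - 1) * x = 1 := by rw [← pow_succ, Nat.sub_add_cancel hm, h]
  calc (x ^ (m - 1)) ^ (m - 1) = (x ^ (m - 1)) ^ (m - 1) * (x ^ (m - 1) * x) := by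
        rw [hinv, mul_one]
    _ = (x ^ m) ^ (m - 1) * x := by
        rw [← mul_assoc, ← pow_succ, Nat.sub_add_cancel hm, ← pow_mul, ← pow_mul, mul_comm]
    _ = x := by rw [h, one_pow, one_mul]

theorem FiniteField.natCast_ne_zero_of_coprime {F : Type*} [Field F] [Fintype F] {m : ℕ}
    (h : m.Coprime (Fintype.card F)) : (m : F) ≠ 0 := by
  intro hm
  have hdvd : ringChar F ∣ Nat.gcd m (Fintype.card F) :=
    Nat.dvd_gcd ((ringChar.spec F m).mp hm)
      ((ringChar.spec F _).mp (FiniteField.cast_card_eq_zero F))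
  rw [h, Nat.dvd_one] at hdvd
  exact CharP.ringChar_ne_one hdvd

theorem FiniteField.exists_sq_add_sq_eq_neg_one (F : Type*) [Field F] [Finite F] :
    ∃ a b : F, a ^ 2 + b ^ 2 = -1 := by
  have : NeZero (ringChar F) := ⟨(CharP.char_is_prime F (ringChar F)).ne_zero⟩
  obtain ⟨a, b, hab⟩ := CharP.sq_add_sq F (ringChar F) (-1)
  exact ⟨a, b, by simpa using hab⟩

namespace Matrix

variable {m R : Type*} [Fintype m] [DecidableEq m] [CommRing R]

theorem det_fromBlocks_zero₁₁ (B C D : Matrix m m R) :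
    (fromBlocks 0 B C D).det = (-1) ^ Fintype.card m * B.det * C.det := by
  have hfactor : fromBlocks 0 B C D = fromBlocks 0 1 1 1 * fromBlocks C (D - B) 0 B := by
    simp [fromBlocks_multiply]
  rw [hfactor, det_mul, det_fromBlocks_one₂₂, det_fromBlocks_zero₂₁, Matrix.mul_one, zero_sub,
    det_neg, det_one]
  ring

theorem det_eq_neg_one_pow_mul_sq_of_toBlocks₁₁_eq_zero (M : Matrix (m ⊕ m) (m ⊕ m) R)
    (hM : Mᵀ = M) (h₁₁ : M.toBlocks₁₁ = 0) :
    M.det = (-1) ^ Fintype.card m * M.toBlocks₁₂.det ^ 2 := by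
  have h₂₁ : M.toBlocks₂₁ = M.toBlocks₁₂ᵀ := by
    conv_lhs => rw [← hM]
    rfl
  rw [← fromBlocks_toBlocks M, h₁₁, h₂₁, det_fromBlocks_zero₁₁, det_transpose]
  simp [sq, mul_assoc]

end Matrix

section DotProduct

open Matrix Module

variable {F ι : Type*} [Field F] [Fintype ι]

theorem nondegenerate_dotProductBilin :
    (dotProductBilin F F : LinearMap.BilinForm F (ι → F)).Nondegenerate := by
  classical
  refine (LinearMap.IsSymm.isRefl ⟨dotProduct_comm⟩).nondegenerate_iff_separatingLeft.mpr ?_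
  intro x hx
  funext i
  simpa using hx (Pi.single i 1)

theorem two_mul_finrank_eq_card_of_orthogonal_eq_self (D : Submodule F (ι → F))
    (hD : LinearMap.BilinForm.orthogonal (dotProductBilin F F) D = D) :
    2 * finrank F D = Fintype.card ι := by
  have hdim := LinearMap.BilinForm.finrank_orthogonal nondegenerate_dotProductBilin D
  have hle := D.finrank_le
  rw [hD] at hdim
  rw [finrank_fintype_fun_eq_card] at hdim hle
  omega

theorem exists_det_gram_eq_sq {κ : Type*} [Fintype κ] [DecidableEq κ] (u : Basis κ F (ι → F)) :
    ∃ a ≠ 0, (Matrix.of fun i j => u i ⬝ᵥ u j).det = a ^ 2 := by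
  let e := (Pi.basisFun F ι).reindex (Basis.indexEquiv (Pi.basisFun F ι) u)
  let A := e.toMatrix u
  have hgram : Aᵀ * A = Matrix.of fun i j => u i ⬝ᵥ u j := by
    ext i j
    simp only [A, e, Basis.toMatrix_reindex, transpose_apply, submatrix_apply, id, mul_apply,
      Basis.toMatrix_apply, Pi.basisFun_repr, of_apply, dotProduct]
    exact Equiv.sum_comp _ fun s => u i s * u j s
  refine ⟨A.det, (isUnit_det_of_right_inverse (e.toMatrix_mul_toMatrix_flip u)).ne_zero, ?_⟩
  rw [← hgram, det_mul, det_transpose, sq]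

theorem isSquare_neg_one_pow_finrank_of_isotropic (D : Submodule F (ι → F))
    (hD : ∀ x ∈ D, ∀ y ∈ D, x ⬝ᵥ y = 0) (hcard : 2 * finrank F D = Fintype.card ι) :
    IsSquare ((-1 : F) ^ finrank F D) := by
  set k := finrank F D
  obtain ⟨W, hW⟩ := D.exists_isCompl
  have hWk : finrank F W = k := by
    have := Submodule.finrank_add_eq_of_isCompl hW
    rw [finrank_fintype_fun_eq_card] at this
    omega
  let bD := finBasisOfFinrankEq F D rfl
  let u : Basis (Fin k ⊕ Fin k) F (ι → F) :=
    (bD.prod (finBasisOfFinrankEq F W hWk)).map (D.prodEquivOfIsCompl W hW)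
  have hu : ∀ i, u (Sum.inl i) = bD i := by
    intro i
    simp [u, Basis.map_apply, Submodule.coe_prodEquivOfIsCompl']
  set G := Matrix.of fun i j => u i ⬝ᵥ u j
  have hGsymm : Gᵀ = G := by
    ext i j
    exact dotProduct_comm _ _
  have hG₁₁ : G.toBlocks₁₁ = 0 := by
    ext i j
    simpa [G, toBlocks₁₁, hu] using hD _ (bD i).2 _ (bD j).2
  obtain ⟨a, ha, hGa : G.det = a ^ 2⟩ := exists_det_gram_eq_sq u
  rw [det_eq_neg_one_pow_mul_sq_of_toBlocks₁₁_eq_zero G hGsymm hG₁₁, Fintype.card_fin] at hGa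
  have hb : G.toBlocks₁₂.det ≠ 0 := by
    intro hb
    exact ha (pow_eq_zero_iff two_ne_zero |>.mp (by rw [← hGa, hb]; ring))
  exact ⟨a / G.toBlocks₁₂.det, by field_simp; linear_combination hGa⟩

theorem four_dvd_card_of_orthogonal_eq_self (hF : ¬IsSquare (-1 : F)) (D : Submodule F (ι → F))
    (hD : LinearMap.BilinForm.orthogonal (dotProductBilin F F) D = D) : 4 ∣ Fintype.card ι := by
  have hcard := two_mul_finrank_eq_card_of_orthogonal_eq_self D hD
  have hiso : ∀ x ∈ D, ∀ y ∈ D, x ⬝ᵥ y = 0 := by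
    intro x hx y hy
    rw [← hD] at hy
    exact hy x hx
  obtain ⟨t, ht⟩ : Even (finrank F D) := by
    by_contra hodd
    rw [Nat.not_even_iff_odd] at hodd
    have := isSquare_neg_one_pow_finrank_of_isotropic D hiso hcard
    exact hF (by rwa [hodd.neg_one_pow] at this)
  omega

end DotProduct

namespace Rq

variable (F : Type) [Field F] (m : ℕ)

local notation "Y" => AdjoinRoot.root ((X : F[X]) ^ m - 1)

theorem conjR_root : conjR F m Y = Y ^ (m - 1) :=
  AdjoinRoot.liftAlgHom_root _ _ _ _

theorem conjR_involutive (hm : 0 < m) : Function.Involutive (conjR F m) := by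
  have hcomp : (conjR F m).comp (conjR F m) = AlgHom.id F (Rq F m) :=
    AdjoinRoot.algHom_ext <| by
      simp only [AlgHom.comp_apply, conjR_root, map_pow, AlgHom.id_apply]
      exact pow_pred_pow_pred hm (root_pow_eq_one F m)
  exact fun z => DFunLike.congr_fun hcomp z

def augmentation : Rq F m →ₐ[F] F :=
  AdjoinRoot.liftAlgHom _ (Algebra.ofId F F) 1 (by simp)

theorem augmentation_root : augmentation F m Y = 1 :=
  AdjoinRoot.liftAlgHom_root _ _ _ _

theorem augmentation_conjR (z : Rq F m) :
    augmentation F m (conjR F m z) = augmentation F m z := by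
  have hcomp : (augmentation F m).comp (conjR F m) = augmentation F m :=
    AdjoinRoot.algHom_ext <| by
      simp only [AlgHom.comp_apply, conjR_root, map_pow, augmentation_root, one_pow]
  exact DFunLike.congr_fun hcomp z

def trivialIdempotent : Rq F m :=
  algebraMap F (Rq F m) (m : F)⁻¹ * ∑ j ∈ Finset.range m, Y ^ j

theorem trivialIdempotent_mul_root_sub_one : trivialIdempotent F m * (Y - 1) = 0 := by
  rw [trivialIdempotent, mul_assoc, geom_sum_mul, root_pow_eq_one, sub_self, mul_zero]

theorem trivialIdempotent_mul_of_augmentation_eq_zero {s : Rq F m}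
    (hs : augmentation F m s = 0) : trivialIdempotent F m * s = 0 := by
  induction s using AdjoinRoot.induction_on with
  | ih p =>
    have hroot : p.IsRoot 1 := by
      have hev : aeval (1 : F) p = 0 := by rwa [augmentation, AdjoinRoot.liftAlgHom_mk] at hs
      rwa [IsRoot.def, ← coe_aeval_eq_eval]
    obtain ⟨g, rfl⟩ := dvd_iff_isRoot.mpr hroot
    rw [map_mul, ← mul_assoc, map_sub, AdjoinRoot.mk_X, AdjoinRoot.mk_C, map_one,
      trivialIdempotent_mul_root_sub_one, zero_mul]

theorem trivialIdempotent_mul (r : Rq F m) :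
    trivialIdempotent F m * r =
      algebraMap F (Rq F m) (augmentation F m r) * trivialIdempotent F m := by
  rw [mul_comm _ (trivialIdempotent F m), ← sub_eq_zero, ← mul_sub]
  exact trivialIdempotent_mul_of_augmentation_eq_zero F m (by
    rw [map_sub, AlgHom.commutes, Algebra.algebraMap_self, RingHom.id_apply, sub_self])

theorem augmentation_trivialIdempotent (hm : (m : F) ≠ 0) :
    augmentation F m (trivialIdempotent F m) = 1 := by
  simp only [trivialIdempotent, map_mul, AlgHom.commutes, map_sum, map_pow, augmentation_root,
    one_pow, Finset.sum_const, Finset.card_range, nsmul_eq_mul, mul_one, Algebra.algebraMap_self,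
    RingHom.id_apply, inv_mul_cancel₀ hm]

variable {F m} {n : ℕ}

theorem herm_zero_left (y : Fin n → Rq F m) : herm F m 0 y = 0 := by
  simp [herm]

variable (F m n) in
def augmentationMap : (Fin n → Rq F m) →ₗ[F] (Fin n → F) :=
  LinearMap.compLeft (augmentation F m).toLinearMap (Fin n)

theorem augmentationMap_apply (x : Fin n → Rq F m) (j : Fin n) :
    augmentationMap F m n x j = augmentation F m (x j) :=
  rfl

theorem augmentation_herm (x y : Fin n → Rq F m) :
    augmentation F m (herm F m x y) = augmentationMap F m n x ⬝ᵥ augmentationMap F m n y := by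
  simp only [herm, map_sum, map_mul, augmentation_conjR]
  rfl

theorem herm_conjR_trivialIdempotent_mul (hm : 0 < m) (x : Fin n → Rq F m) (z : Fin n → F) :
    herm F m x (fun j => conjR F m (trivialIdempotent F m * algebraMap F _ (z j))) =
      algebraMap F _ (augmentationMap F m n x ⬝ᵥ z) * trivialIdempotent F m := by
  simp only [herm, conjR_involutive F m hm _, dotProduct, map_sum, Finset.sum_mul]
  refine Finset.sum_congr rfl fun j _ => ?_
  rw [← mul_assoc, mul_comm (x j), trivialIdempotent_mul, map_mul]
  rw [augmentationMap_apply]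
  ring

theorem orthogonal_map_augmentationMap (hm : 0 < m) (hmF : (m : F) ≠ 0)
    {C : Submodule (Rq F m) (Fin n → Rq F m)} (hC : IsHermSelfDual F m C) :
    LinearMap.BilinForm.orthogonal (dotProductBilin F F) ((C.restrictScalars F).map
      (augmentationMap F m n)) = (C.restrictScalars F).map (augmentationMap F m n) := by
  ext z
  simp only [LinearMap.BilinForm.mem_orthogonal_iff, dotProductBilin_apply_apply]
  constructor
  · intro hz
    set v : Fin n → Rq F m := fun j => conjR F m (trivialIdempotent F m * algebraMap F _ (z j))
    have hv : v ∈ C := by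
      refine (hC v).mpr fun x hx => ?_
      rw [herm_conjR_trivialIdempotent_mul hm, hz _ ⟨x, hx, rfl⟩, map_zero, zero_mul]
    refine ⟨v, hv, funext fun j => ?_⟩
    simp only [v, augmentationMap_apply, augmentation_conjR, map_mul, AlgHom.commutes,
      augmentation_trivialIdempotent F m hmF, one_mul, Algebra.algebraMap_self, RingHom.id_apply]
  · rintro ⟨y, hy, rfl⟩ _ ⟨x, hx, rfl⟩
    rw [← augmentation_herm, (hC y).mp hy x hx, map_zero]

theorem exists_isHermSelfDual_four (hm : 0 < m) {a b : F} (hab : a ^ 2 + b ^ 2 = -1) :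
    ∃ C : Submodule (Rq F m) (Fin 4 → Rq F m), IsHermSelfDual F m C := by
  set α := algebraMap F (Rq F m) a
  set β := algebraMap F (Rq F m) b
  have hαβ : α ^ 2 + β ^ 2 = -1 := by simp only [α, β, ← map_pow, ← map_add, hab, map_neg, map_one]
  have hα : conjR F m α = α := AlgHom.commutes _ a
  have hβ : conjR F m β = β := AlgHom.commutes _ b
  let H : Matrix (Fin 2) (Fin 4) (Rq F m) := !![1, 0, α, β; 0, 1, -β, α]
  have hmem : ∀ y, y ∈ LinearMap.ker H.mulVecLin ↔
      y 0 + α * y 2 + β * y 3 = 0 ∧ y 1 - β * y 2 + α * y 3 = 0 := by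
    intro y
    simp [H, funext_iff, Fin.forall_fin_two, dotProduct, Fin.sum_univ_four, sub_eq_add_neg]
  refine ⟨LinearMap.ker H.mulVecLin, fun y => ?_⟩
  rw [hmem]
  constructor
  · rintro ⟨hy₀, hy₁⟩ x hx
    obtain ⟨hx₀, hx₁⟩ := (hmem x).mp hx
    have hc₀ := congrArg (conjR F m) hy₀
    have hc₁ := congrArg (conjR F m) hy₁
    simp only [map_add, map_sub, map_mul, hα, hβ, map_zero] at hc₀ hc₁
    rw [herm, Fin.sum_univ_four]
    linear_combination conjR F m (y 0) * hx₀ + conjR F m (y 1) * hx₁ + (-α * x 2 - β * x 3) * hc₀ +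
      (β * x 2 - α * x 3) * hc₁ + (x 2 * conjR F m (y 2) + x 3 * conjR F m (y 3)) * hαβ
  · intro hy
    have h₀ := hy ![1, 0, α, β] <| (hmem _).mpr <| by
      simp only [Matrix.cons_val_zero, Matrix.cons_val_one, Matrix.cons_val]
      exact ⟨by linear_combination hαβ, by ring⟩
    have h₁ := hy ![0, 1, -β, α] <| (hmem _).mpr <| by
      simp only [Matrix.cons_val_zero, Matrix.cons_val_one, Matrix.cons_val]
      exact ⟨by ring, by linear_combination hαβ⟩
    have h₀' := congrArg (conjR F m) h₀
    have h₁' := congrArg (conjR F m) h₁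
    simp only [herm, Fin.sum_univ_four, Matrix.cons_val_zero, Matrix.cons_val_one, Matrix.cons_val,
      map_add, map_mul, map_neg, map_one, map_zero, conjR_involutive F m hm _, hα, hβ] at h₀' h₁'
    exact ⟨by linear_combination h₀', by linear_combination h₁'⟩

variable (F m n) in
def block {t : ℕ} (i : Fin t) : (Fin (t * n) → Rq F m) →ₗ[Rq F m] (Fin n → Rq F m) :=
  LinearMap.funLeft _ _ fun j => finProdFinEquiv (i, j)

theorem herm_eq_sum_herm_block {t : ℕ} (x y : Fin (t * n) → Rq F m) :
    herm F m x y = ∑ i, herm F m (block F m n i x) (block F m n i y) := by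
  simp only [herm, block, LinearMap.funLeft_apply, ← Fintype.sum_prod_type']
  exact (finProdFinEquiv.sum_comp fun p => x p * conjR F m (y p)).symm

theorem exists_isHermSelfDual_mul (t : ℕ) {C₀ : Submodule (Rq F m) (Fin n → Rq F m)}
    (hC₀ : IsHermSelfDual F m C₀) :
    ∃ C : Submodule (Rq F m) (Fin (t * n) → Rq F m), IsHermSelfDual F m C := by
  refine ⟨⨅ i, C₀.comap (block F m n i), fun y => ?_⟩
  simp only [Submodule.mem_iInf, Submodule.mem_comap]
  constructor
  · intro hy x hx
    rw [herm_eq_sum_herm_block]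
    exact Finset.sum_eq_zero fun i _ => (hC₀ _).mp (hy i) _ (hx i)
  · intro hy i
    refine (hC₀ _).mpr fun x₀ hx₀ => ?_
    let x₁ : Fin t → Fin n → Rq F m := Pi.single i x₀
    let x : Fin (t * n) → Rq F m := Function.uncurry x₁ ∘ finProdFinEquiv.symm
    have hblock : ∀ i', block F m n i' x = x₁ i' := fun i' => funext fun j => by
      simp only [block, x, LinearMap.funLeft_apply, Function.comp_apply, Equiv.symm_apply_apply,
        Function.uncurry_apply_pair]
    have hx : ∀ i', block F m n i' x ∈ C₀ := by
      intro i'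
      rw [hblock]
      by_cases hi : i' = i
      · simpa [x₁, hi] using hx₀
      · simp [x₁, hi]
    have := hy x hx
    rw [herm_eq_sum_herm_block, Finset.sum_eq_single i] at this
    · simpa [hblock, x₁] using this
    · intro i' _ hi
      simp [hblock, x₁, hi, herm_zero_left]
    · simp

end Rq

/-- There exists a Hermitian self-dual linear code over `R = F_q[Y]/(Y^m − 1)` of
length `ℓ` iff `4 ∣ ℓ` (case `q ≡ 3 (mod 4)`). -/
theorem statement1 (F : Type) [Field F] [Fintype F]
    (hq : Fintype.card F % 4 = 3)
    (m : ℕ) (hm : 0 < m) (hcop : Nat.Coprime m (Fintype.card F)) (ℓ : ℕ) :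
    (∃ C : Submodule (Rq F m) (Fin ℓ → Rq F m), IsHermSelfDual F m C) ↔ 4 ∣ ℓ := by
  constructor
  · rintro ⟨C, hC⟩
    have hF : ¬IsSquare (-1 : F) := fun h => FiniteField.isSquare_neg_one_iff.mp h hq
    simpa using four_dvd_card_of_orthogonal_eq_self hF _
      (Rq.orthogonal_map_augmentationMap hm (FiniteField.natCast_ne_zero_of_coprime hcop) hC)
  · rintro ⟨t, rfl⟩
    obtain ⟨a, b, hab⟩ := FiniteField.exists_sq_add_sq_eq_neg_one F
    obtain ⟨C₄, hC₄⟩ := Rq.exists_isHermSelfDual_four hm hab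
    rw [mul_comm]
    exact Rq.exists_isHermSelfDual_mul t hC₄
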